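/- arXiv:1812.07408 — 3 statements merged into one kernel-verified Lean document; each statement's English description precedes it below -/
import Mathlib

section
/- (Theorem 1.) Suppose y > 0 and let r, t, u be real numbers with Φ(r) = G(y), Φ(t) = α + Φ(r)·(1−α), and Φ(u) = F(y). If r > 0 (the quantile residual of the continuous component is positive, so the positive branch of the zero-adjusted quantile residual applies), then t = u; that is, the zero-adjusted quantile residual r⋆ = Φ⁻¹(α + Φ(r)(1−α)) coincides with the randomized quantile residual r^q = Φ⁻¹(F(y)). -/
open MeasureTheory ProbabilityTheory Set

lemma isProbabilityMeasure_ofReal_smul_add {Ω : Type*} [MeasurableSpace Ω] {μ ν : Measure Ω}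
    [IsProbabilityMeasure μ] [IsProbabilityMeasure ν] {p : ℝ} (hp0 : 0 ≤ p) (hp1 : p ≤ 1) :
    IsProbabilityMeasure (ENNReal.ofReal p • μ + ENNReal.ofReal (1 - p) • ν) where
  measure_univ := by
    simp [← ENNReal.ofReal_add hp0 (sub_nonneg.mpr hp1)]

lemma cdf_ofReal_smul_add {μ ν : Measure ℝ} [IsProbabilityMeasure μ] [IsProbabilityMeasure ν]
    {p : ℝ} (hp0 : 0 ≤ p) (hp1 : p ≤ 1) (x : ℝ) :
    cdf (ENNReal.ofReal p • μ + ENNReal.ofReal (1 - p) • ν) x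
      = p * cdf μ x + (1 - p) * cdf ν x := by
  have hq : 0 ≤ 1 - p := sub_nonneg.mpr hp1
  have hpμ := mul_nonneg hp0 (cdf_nonneg μ x)
  have hqν := mul_nonneg hq (cdf_nonneg ν x)
  have := isProbabilityMeasure_ofReal_smul_add (μ := μ) (ν := ν) hp0 hp1
  rw [cdf_eq_real, measureReal_def, Measure.add_apply, Measure.smul_apply, Measure.smul_apply,
    ← ofReal_cdf, ← ofReal_cdf, smul_eq_mul, smul_eq_mul, ← ENNReal.ofReal_mul hp0,
    ← ENNReal.ofReal_mul hq, ← ENNReal.ofReal_add hpμ hqν,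
    ENNReal.toReal_ofReal (add_nonneg hpμ hqν)]

lemma cdf_dirac_of_le {a x : ℝ} (h : a ≤ x) : cdf (Measure.dirac a) x = 1 := by
  rw [cdf_eq_real, measureReal_def, Measure.dirac_apply_of_mem (mem_Iic.mpr h),
    ENNReal.toReal_one]

lemma strictMono_cdf_of_absolutelyContinuous {μ : Measure ℝ} [IsProbabilityMeasure μ]
    (h : volume ≪ μ) : StrictMono (cdf μ) := by
  intro a b hab
  have hpos : μ (Ioc a b) ≠ 0 := fun h0 ↦ hab.not_ge (by simpa using h h0)
  rw [← measure_cdf (μ := μ), StieltjesFunction.measure_Ioc, ne_eq, ENNReal.ofReal_eq_zero,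
    not_le, sub_pos] at hpos
  exact hpos

theorem zar_zaqr_eq_rqr_general
    (α : ℝ) (hα0 : 0 < α) (hα1 : α < 1)
    (ν : Measure ℝ) [IsProbabilityMeasure ν]
    (μ : Measure ℝ)
    (hμ : μ = (ENNReal.ofReal α) • Measure.dirac (0 : ℝ)
            + (ENNReal.ofReal (1 - α)) • ν)
    (y : ℝ) (hy : 0 < y) (r t u : ℝ)
    (hr : cdf (gaussianReal 0 1) r = cdf ν y)
    (ht : cdf (gaussianReal 0 1) t = α + cdf (gaussianReal 0 1) r * (1 - α))
    (hu : cdf (gaussianReal 0 1) u = cdf μ y) :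
    t = u := by
  have hΦ : StrictMono (cdf (gaussianReal 0 1)) :=
    strictMono_cdf_of_absolutelyContinuous (gaussianReal_absolutelyContinuous' 0 one_ne_zero)
  apply hΦ.injective
  rw [ht, hu, hμ, cdf_ofReal_smul_add hα0.le hα1.le, cdf_dirac_of_le hy.le, hr]
  ring

/-- Theorem 1: if y > 0, Φ(r) = G(y), Φ(t) = α + Φ(r)(1−α), Φ(u) = F(y)
and r > 0, then t = u: the zero-adjusted quantile residual coincides with the randomized
quantile residual. -/
theorem zar_zaqr_eq_rqr
    (α : ℝ) (hα0 : 0 < α) (hα1 : α < 1)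
    (ν : Measure ℝ) [IsProbabilityMeasure ν] (hν : ν (Set.Ioi (0 : ℝ)) = 1)
    (μ : Measure ℝ)
    (hμ : μ = (ENNReal.ofReal α) • Measure.dirac (0 : ℝ)
            + (ENNReal.ofReal (1 - α)) • ν)
    (y : ℝ) (hy : 0 < y) (r t u : ℝ)
    (hr : cdf (gaussianReal 0 1) r = cdf ν y)
    (ht : cdf (gaussianReal 0 1) t = α + cdf (gaussianReal 0 1) r * (1 - α))
    (hu : cdf (gaussianReal 0 1) u = cdf μ y)
    (hrpos : 0 < r) :
    t = u :=
  zar_zaqr_eq_rqr_general α hα0 hα1 ν μ hμ y hy r t u hr ht hu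
end

section
/- (Theorem 2, lower tail.) Let (Ω, P) be a probability space, let B ⊆ Ω be a measurable event with P(B) = 1−α (the event that the response is positive), and let Z : Ω → ℝ be a random variable whose conditional distribution given B is standard normal, i.e., P(B ∩ Z⁻¹(A)) = (1−α)·γ(A) for every Borel set A ⊆ ℝ. If k is a real number with Φ(k) > (1+α)/2, then P(B ∩ {ω : (1−α)·Φ(Z(ω)) < 1−Φ(k)}) = 1−Φ(k). (The event in question is exactly {r⋆ < −k}, so Pr(r⋆ < −k) = 1−Φ(k).) -/
/-!
The distribution function Φ of the standard normal law is continuous, so `Φ(X)` is uniform on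
`(0, 1)` for `X ~ γ`: `γ {Φ < c} = c` for `0 ≤ c < 1`. The event in question is
`B ∩ Z⁻¹' {Φ < c}` with `c = (1 - Φ(k)) / (1 - α)`, and `Φ(k) > (1 + α) / 2` gives `c < 1`, so its
probability is `(1 - α) · c = 1 - Φ(k)`.
-/

open MeasureTheory ProbabilityTheory Set

theorem StieltjesFunction.continuous_of_nullSingletonClass (f : StieltjesFunction ℝ)
    [NullSingletonClass f.measure] : Continuous f := by
  refine continuous_iff_continuousAt.2 fun x => ?_
  have hleft : Function.leftLim f x = f x := by
    have h : ENNReal.ofReal (f x - Function.leftLim f x) = 0 :=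
      f.measure_singleton x ▸ MeasureTheory.measure_singleton x
    rw [ENNReal.ofReal_eq_zero, sub_nonpos] at h
    exact le_antisymm (f.mono.leftLim_le le_rfl) h
  have hright : Function.rightLim f x = f x := (f.right_continuous x).rightLim_eq
  rw [f.mono.continuousAt_iff_leftLim_eq_rightLim, hleft, hright]

theorem Monotone.exists_eq_and_setOf_lt_eq_Iio {α β : Type*}
    [ConditionallyCompleteLinearOrder α] [TopologicalSpace α] [OrderTopology α]
    [DenselyOrdered α] [LinearOrder β] [TopologicalSpace β] [OrderClosedTopology β]
    {f : α → β} (hf : Monotone f) (hfc : Continuous f) {c : β}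
    (hlt : ∃ x, f x < c) (hge : ∃ x, c ≤ f x) :
    ∃ t, f t = c ∧ {x | f x < c} = Iio t := by
  obtain ⟨a, ha⟩ := hlt
  set T := {x | c ≤ f x}
  have hT : IsClosed T := isClosed_le continuous_const hfc
  have hTbdd : BddBelow T := ⟨a, fun y hy => le_of_lt (hf.reflect_lt (ha.trans_le hy))⟩
  set t := sInf T
  have hS : {x | f x < c} = Iio t := by
    ext x
    refine ⟨fun hx => lt_of_not_ge fun htx => hx.not_ge ?_, fun hx => ?_⟩
    · exact (hT.csInf_mem hge hTbdd).trans (hf htx)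
    · exact lt_of_not_ge fun hcx => hx.not_ge (csInf_le hTbdd hcx)
  refine ⟨t, le_antisymm ?_ (hT.csInf_mem hge hTbdd), hS⟩
  have hat : a < t := by rw [← mem_Iio, ← hS]; exact ha
  have : t ∈ closure {x | f x < c} := by
    rw [hS, closure_Iio' ⟨a, hat⟩]; exact self_mem_Iic
  exact closure_lt_subset_le hfc continuous_const this

theorem measure_setOf_cdf_lt (μ : Measure ℝ) [IsProbabilityMeasure μ] [NullSingletonClass μ]
    {c : ℝ} (hc0 : 0 ≤ c) (hc1 : c < 1) :
    μ {x | cdf μ x < c} = ENNReal.ofReal c := by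
  rcases hc0.eq_or_lt with rfl | hc0
  · simp [(cdf_nonneg μ _).not_gt]
  have : NullSingletonClass (cdf μ).measure := by rwa [measure_cdf]
  obtain ⟨t, hct, hS⟩ := (cdf μ).mono.exists_eq_and_setOf_lt_eq_Iio
    (cdf μ).continuous_of_nullSingletonClass ((tendsto_cdf_atBot μ).eventually_lt_const hc0).exists
    ((tendsto_cdf_atTop μ).eventually_const_le hc1).exists
  rw [hS, measure_congr Iio_ae_eq_Iic, ← ofReal_cdf, hct]

theorem zaqr_lower_tail_general
    {Ω : Type*} [MeasurableSpace Ω] (P : Measure Ω)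
    (α : ℝ) (hα1 : α < 1)
    (B : Set Ω)
    (Z : Ω → ℝ)
    (hcond : ∀ A : Set ℝ, MeasurableSet A →
      P (B ∩ Z ⁻¹' A) = ENNReal.ofReal (1 - α) * gaussianReal 0 1 A)
    (k : ℝ) (hk : (1 + α) / 2 < cdf (gaussianReal 0 1) k) :
    P (B ∩ {ω : Ω | (1 - α) * cdf (gaussianReal 0 1) (Z ω)
        < 1 - cdf (gaussianReal 0 1) k})
      = ENNReal.ofReal (1 - cdf (gaussianReal 0 1) k) := by
  set Φ := cdf (gaussianReal 0 1)
  have : NullSingletonClass (gaussianReal 0 1) := nullSingletonClass_gaussianReal one_ne_zero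
  have h1α : 0 < 1 - α := sub_pos.2 hα1
  set c := (1 - Φ k) / (1 - α)
  have hevent : {ω | (1 - α) * Φ (Z ω) < 1 - Φ k} = Z ⁻¹' {x | Φ x < c} := by
    ext ω
    simp only [mem_ofPred_eq, mem_preimage, c, lt_div_iff₀ h1α, mul_comm]
  have hc0 : 0 ≤ c := div_nonneg (sub_nonneg.2 (cdf_le_one _ k)) h1α.le
  have hc1 : c < 1 := (div_lt_one h1α).2 (by linarith)
  rw [hevent, hcond _ (measurableSet_lt (cdf _).mono.measurable measurable_const),
    measure_setOf_cdf_lt _ hc0 hc1, ← ENNReal.ofReal_mul h1α.le, mul_div_cancel₀ _ h1α.ne']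

/-- Theorem 2, lower tail: if P(B) = 1−α, the conditional distribution of Z
given B is standard normal, and Φ(k) > (1+α)/2, then
P(B ∩ {(1−α)·Φ(Z) < 1−Φ(k)}) = 1−Φ(k), i.e. Pr(r⋆ < −k) = 1−Φ(k). -/
theorem zaqr_lower_tail
    {Ω : Type*} [MeasurableSpace Ω] (P : Measure Ω) [IsProbabilityMeasure P]
    (α : ℝ) (hα0 : 0 < α) (hα1 : α < 1)
    (B : Set Ω) (hB : MeasurableSet B) (hPB : P B = ENNReal.ofReal (1 - α))
    (Z : Ω → ℝ) (hZ : Measurable Z)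
    (hcond : ∀ A : Set ℝ, MeasurableSet A →
      P (B ∩ Z ⁻¹' A) = ENNReal.ofReal (1 - α) * gaussianReal 0 1 A)
    (k : ℝ) (hk : (1 + α) / 2 < cdf (gaussianReal 0 1) k) :
    P (B ∩ {ω : Ω | (1 - α) * cdf (gaussianReal 0 1) (Z ω)
        < 1 - cdf (gaussianReal 0 1) k})
      = ENNReal.ofReal (1 - cdf (gaussianReal 0 1) k) :=
  zaqr_lower_tail_general P α hα1 B Z hcond k hk
end

section
/- (Theorem 2, upper tail.) Let (Ω, P) be a probability space, let B ⊆ Ω be a measurable event with P(B) = 1−α (the event that the response is positive), and let Z : Ω → ℝ be a random variable whose conditional distribution given B is standard normal, i.e., P(B ∩ Z⁻¹(A)) = (1−α)·γ(A) for every Borel set A ⊆ ℝ. If k is a real number with Φ(k) > (1+α)/2, then P(B ∩ {ω : α + (1−α)·Φ(Z(ω)) > Φ(k)}) = 1−Φ(k). (The event in question is exactly {r⋆ > k}, so Pr(r⋆ > k) = 1−Φ(k).) -/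
/-!
The standard normal cdf `Φ` is a continuous increasing bijection `ℝ → (0, 1)`. Hence the event
`Φ k < α + (1 - α) Φ(Z)` is `Z > q` for the `q` with `Φ q = (Φ k - α) / (1 - α)`, a number in
`(0, 1)` because `Φ k > (1 + α) / 2 > α`. Conditionally on `B`, `Z` is standard normal, so the event
has probability `(1 - α) (1 - Φ q) = 1 - Φ k`.
-/

open MeasureTheory ProbabilityTheory Set

namespace ProbabilityTheory

variable (μ : Measure ℝ) [IsProbabilityMeasure μ]

lemma continuous_cdf [NullSingletonClass μ] : Continuous (cdf μ) := by
  refine continuous_iff_continuousAt.2 fun x ↦ ?_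
  rw [(monotone_cdf μ).continuousAt_iff_leftLim_eq_rightLim, (cdf μ).rightLim_eq]
  have h_atom : ENNReal.ofReal (cdf μ x - Function.leftLim (cdf μ) x) = 0 := by
    rw [← StieltjesFunction.measure_singleton, measure_cdf, measure_singleton]
  have h_le := (monotone_cdf μ).leftLim_le (le_refl x)
  rw [ENNReal.ofReal_eq_zero] at h_atom
  linarith

lemma strictMono_cdf [μ.IsOpenPosMeasure] : StrictMono (cdf μ) := by
  intro a b hab
  have h_pos : 0 < μ (Ioc a b) :=
    (isOpen_Ioo.measure_pos μ (nonempty_Ioo.2 hab)).trans_le (measure_mono Ioo_subset_Ioc_self)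
  rw [← measure_cdf μ, StieltjesFunction.measure_Ioc, ENNReal.ofReal_pos] at h_pos
  linarith

lemma measure_Ioi_eq_ofReal_one_sub_cdf (x : ℝ) :
    μ (Ioi x) = ENNReal.ofReal (1 - cdf μ x) := by
  rw [← compl_Iic, prob_compl_eq_one_sub measurableSet_Iic, ← ofReal_cdf,
    ENNReal.ofReal_sub _ (cdf_nonneg μ x), ENNReal.ofReal_one]

lemma exists_cdf_eq [NullSingletonClass μ] {c : ℝ} (hc : c ∈ Ioo 0 1) : ∃ q, cdf μ q = c := by
  refine mem_range_of_exists_le_of_exists_ge (continuous_cdf μ) ?_ ?_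
  · exact ((tendsto_cdf_atBot μ).eventually (eventually_lt_nhds hc.1)).exists.imp fun _ ↦ le_of_lt
  · exact ((tendsto_cdf_atTop μ).eventually (eventually_gt_nhds hc.2)).exists.imp fun _ ↦ le_of_lt

end ProbabilityTheory

theorem zaqr_upper_tail_general
    {Ω : Type*} [MeasurableSpace Ω] (P : Measure Ω)
    (α : ℝ) (hα1 : α < 1)
    (B : Set Ω)
    (Z : Ω → ℝ)
    (hcond : ∀ A : Set ℝ, MeasurableSet A →
      P (B ∩ Z ⁻¹' A) = ENNReal.ofReal (1 - α) * gaussianReal 0 1 A)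
    (k : ℝ) (hk : (1 + α) / 2 < cdf (gaussianReal 0 1) k) :
    P (B ∩ {ω : Ω | cdf (gaussianReal 0 1) k
        < α + (1 - α) * cdf (gaussianReal 0 1) (Z ω)})
      = ENNReal.ofReal (1 - cdf (gaussianReal 0 1) k) := by
  have := nullSingletonClass_gaussianReal (μ := 0) one_ne_zero
  have := (gaussianReal_absolutelyContinuous' 0 one_ne_zero).isOpenPosMeasure
  have hΦ_mono := strictMono_cdf (gaussianReal 0 1)
  have h1α : 0 < 1 - α := by linarith
  have hΦk_lt_one : cdf (gaussianReal 0 1) k < 1 :=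
    (hΦ_mono (lt_add_one k)).trans_le (cdf_le_one _ _)
  obtain ⟨q, hq⟩ := exists_cdf_eq (gaussianReal 0 1)
    (c := (cdf (gaussianReal 0 1) k - α) / (1 - α))
    ⟨div_pos (by linarith) h1α, (div_lt_one h1α).2 (by linarith)⟩
  have h_event : {ω | cdf (gaussianReal 0 1) k < α + (1 - α) * cdf (gaussianReal 0 1) (Z ω)}
      = Z ⁻¹' Ioi q := by
    ext ω
    rw [mem_ofPred_eq, mem_preimage, mem_Ioi, ← hΦ_mono.lt_iff_lt (a := q), hq, div_lt_iff₀ h1α]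
    exact ⟨fun h ↦ by linarith, fun h ↦ by linarith⟩
  rw [h_event, hcond _ measurableSet_Ioi, measure_Ioi_eq_ofReal_one_sub_cdf, hq,
    ← ENNReal.ofReal_mul h1α.le]
  congr 1
  field_simp
  ring

/-- Theorem 2, upper tail: if P(B) = 1−α, the conditional distribution of Z
given B is standard normal, and Φ(k) > (1+α)/2, then
P(B ∩ {α + (1−α)·Φ(Z) > Φ(k)}) = 1−Φ(k), i.e. Pr(r⋆ > k) = 1−Φ(k). -/
theorem zaqr_upper_tail
    {Ω : Type*} [MeasurableSpace Ω] (P : Measure Ω) [IsProbabilityMeasure P]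
    (α : ℝ) (hα0 : 0 < α) (hα1 : α < 1)
    (B : Set Ω) (hB : MeasurableSet B) (hPB : P B = ENNReal.ofReal (1 - α))
    (Z : Ω → ℝ) (hZ : Measurable Z)
    (hcond : ∀ A : Set ℝ, MeasurableSet A →
      P (B ∩ Z ⁻¹' A) = ENNReal.ofReal (1 - α) * gaussianReal 0 1 A)
    (k : ℝ) (hk : (1 + α) / 2 < cdf (gaussianReal 0 1) k) :
    P (B ∩ {ω : Ω | cdf (gaussianReal 0 1) k
        < α + (1 - α) * cdf (gaussianReal 0 1) (Z ω)})
      = ENNReal.ofReal (1 - cdf (gaussianReal 0 1) k) :=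
  zaqr_upper_tail_general P α hα1 B Z hcond k hk
end
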